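/- arXiv:cs/9811001 — 3 statements merged into one kernel-verified Lean document; each statement's English description precedes it below -/
import Mathlib

section
/- The pairwise-union product 𝒮₁ ⊛ 𝒮₂ := { S₁ ∪ S₂ | S₁ ∈ 𝒮₁, S₂ ∈ 𝒮₂ } is a greatest lower bound of 𝒮₁ and 𝒮₂ with respect to ≪: one has 𝒮₁ ⊛ 𝒮₂ ≪ 𝒮₁ and 𝒮₁ ⊛ 𝒮₂ ≪ 𝒮₂, and whenever 𝒯 ≪ 𝒮₁ and 𝒯 ≪ 𝒮₂ then 𝒯 ≪ 𝒮₁ ⊛ 𝒮₂; hence ⊗ is the greatest lower bound operator on the quotient PM. -/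
/-- `ModeLe 𝒮₁ 𝒮₂` is the relation `𝒮₁ ≪ 𝒮₂` on polymorphic mode descriptions:
for every `S₁ ∈ 𝒮₁` there exists `S₂ ∈ 𝒮₂` with `S₂ ⊆ S₁`. -/
def ModeLe {Para : Type*} (𝒮₁ 𝒮₂ : Set (Set Para)) : Prop :=
  ∀ S₁ ∈ 𝒮₁, ∃ S₂ ∈ 𝒮₂, S₂ ⊆ S₁

/-- `ModeEquiv 𝒮₁ 𝒮₂` is the equivalence `𝒮₁ ≅ 𝒮₂`. -/
def ModeEquiv {Para : Type*} (𝒮₁ 𝒮₂ : Set (Set Para)) : Prop :=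
  ModeLe 𝒮₁ 𝒮₂ ∧ ModeLe 𝒮₂ 𝒮₁

theorem ModeLe.rfl {Para : Type*} (𝒮 : Set (Set Para)) : ModeLe 𝒮 𝒮 :=
  fun S hS => ⟨S, hS, subset_rfl⟩

theorem ModeLe.trans' {Para : Type*} {𝒮₁ 𝒮₂ 𝒮₃ : Set (Set Para)}
    (h₁ : ModeLe 𝒮₁ 𝒮₂) (h₂ : ModeLe 𝒮₂ 𝒮₃) : ModeLe 𝒮₁ 𝒮₃ := by
  intro S hS
  obtain ⟨T, hT, hTS⟩ := h₁ S hS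
  obtain ⟨U, hU, hUT⟩ := h₂ T hT
  exact ⟨U, hU, hUT.trans hTS⟩

/-- The setoid on `Set (Set Para)` given by `≅`. -/
def modeSetoid (Para : Type*) : Setoid (Set (Set Para)) where
  r := ModeEquiv
  iseqv :=
    ⟨fun S => ⟨ModeLe.rfl S, ModeLe.rfl S⟩,
     fun h => ⟨h.2, h.1⟩,
     fun h h' => ⟨h.1.trans' h'.1, h'.2.trans' h.2⟩⟩

/-- `PM` is the quotient of `Set (Set Para)` by `≅`. -/
def PM (Para : Type*) := Quotient (modeSetoid Para)

theorem ModeLe.congr {Para : Type*} {a a' b b' : Set (Set Para)}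
    (ha : ModeEquiv a a') (hb : ModeEquiv b b') : ModeLe a b ↔ ModeLe a' b' :=
  ⟨fun h => (ha.2.trans' h).trans' hb.1, fun h => (ha.1.trans' h).trans' hb.2⟩

/-- The relation `⪯` induced by `≪` on the quotient `PM`. -/
def PM.le {Para : Type*} : PM Para → PM Para → Prop :=
  Quotient.lift₂ ModeLe (fun _ _ _ _ ha hb => propext (ModeLe.congr ha hb))

/-- `ModeProd 𝒮₁ 𝒮₂` is `𝒮₁ ⊛ 𝒮₂ := { S₁ ∪ S₂ | S₁ ∈ 𝒮₁, S₂ ∈ 𝒮₂ }`. -/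
def ModeProd {Para : Type*} (𝒮₁ 𝒮₂ : Set (Set Para)) : Set (Set Para) :=
  {S | ∃ S₁ ∈ 𝒮₁, ∃ S₂ ∈ 𝒮₂, S = S₁ ∪ S₂}

theorem ModeLe.prod_le_prod {Para : Type*} {a a' b b' : Set (Set Para)}
    (ha : ModeLe a a') (hb : ModeLe b b') : ModeLe (ModeProd a b) (ModeProd a' b') := by
  rintro S ⟨S₁, hS₁, S₂, hS₂, rfl⟩
  obtain ⟨T₁, hT₁, h₁⟩ := ha S₁ hS₁
  obtain ⟨T₂, hT₂, h₂⟩ := hb S₂ hS₂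
  exact ⟨T₁ ∪ T₂, ⟨T₁, hT₁, T₂, hT₂, Eq.refl _⟩, Set.union_subset_union h₁ h₂⟩

/-- The operator `⊗` on the quotient `PM`, `[𝒮₁] ⊗ [𝒮₂] := [𝒮₁ ⊛ 𝒮₂]`. -/
def PM.otimes {Para : Type*} : PM Para → PM Para → PM Para :=
  Quotient.lift₂ (fun a b => Quotient.mk (modeSetoid Para) (ModeProd a b))
    (fun _ _ _ _ ha hb => Quotient.sound
      ⟨ModeLe.prod_le_prod ha.1 hb.1, ModeLe.prod_le_prod ha.2 hb.2⟩)

/-- `𝒮₁ ⊛ 𝒮₂` is a greatest lower bound of `𝒮₁` and `𝒮₂` w.r.t. `≪`; hence `⊗`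
is the greatest lower bound operator on the quotient `PM`. -/
theorem modeProd_isGLB (Para : Type*) :
    (∀ 𝒮₁ 𝒮₂ : Set (Set Para),
      ModeLe (ModeProd 𝒮₁ 𝒮₂) 𝒮₁ ∧ ModeLe (ModeProd 𝒮₁ 𝒮₂) 𝒮₂ ∧
      ∀ 𝒯 : Set (Set Para), ModeLe 𝒯 𝒮₁ → ModeLe 𝒯 𝒮₂ → ModeLe 𝒯 (ModeProd 𝒮₁ 𝒮₂)) ∧
    (∀ a b : PM Para,
      PM.le (PM.otimes a b) a ∧ PM.le (PM.otimes a b) b ∧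
      ∀ c : PM Para, PM.le c a → PM.le c b → PM.le c (PM.otimes a b)) := by
  have key : ∀ 𝒮₁ 𝒮₂ : Set (Set Para),
      ModeLe (ModeProd 𝒮₁ 𝒮₂) 𝒮₁ ∧ ModeLe (ModeProd 𝒮₁ 𝒮₂) 𝒮₂ ∧
      ∀ 𝒯 : Set (Set Para), ModeLe 𝒯 𝒮₁ → ModeLe 𝒯 𝒮₂ → ModeLe 𝒯 (ModeProd 𝒮₁ 𝒮₂) := by
    intro 𝒮₁ 𝒮₂
    refine ⟨?_, ?_, ?_⟩
    · rintro S ⟨S₁, h₁, S₂, h₂, rfl⟩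
      exact ⟨S₁, h₁, Set.subset_union_left⟩
    · rintro S ⟨S₁, h₁, S₂, h₂, rfl⟩
      exact ⟨S₂, h₂, Set.subset_union_right⟩
    · intro 𝒯 h₁ h₂ T hT
      obtain ⟨S₁, hS₁, hs₁⟩ := h₁ T hT
      obtain ⟨S₂, hS₂, hs₂⟩ := h₂ T hT
      exact ⟨S₁ ∪ S₂, ⟨S₁, hS₁, S₂, hS₂, Eq.refl _⟩, Set.union_subset hs₁ hs₂⟩
  refine ⟨key, ?_⟩
  intro a b
  induction a using Quotient.ind
  induction b using Quotient.ind
  rename_i a b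
  refine ⟨(key a b).1, (key a b).2.1, ?_⟩
  intro c
  induction c using Quotient.ind
  rename_i c
  exact (key a b).2.2 c
end

section
/- The semantics of descriptions turns ⊗ into the meet of the mode lattice: for all sets 𝒮₁, 𝒮₂ of sets of mode parameters and every assignment κ : Para → Bool, eval { S₁ ∪ S₂ | S₁ ∈ 𝒮₁, S₂ ∈ 𝒮₂ } κ = eval 𝒮₁ κ ⊓ eval 𝒮₂ κ. (This is the meet half of Theorem 2(a): if 𝒮₁ denotes mode m₁ and 𝒮₂ denotes mode m₂ under κ, then 𝒮₁ ⊗ 𝒮₂ denotes m₁ △ m₂ under κ.) -/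
/-- The interpreted mode of a description `𝒮` under an assignment `κ`,
`eval 𝒮 κ := ⨆ S ∈ 𝒮, ⨅ α ∈ S, κ α`, computed in the two-element complete
lattice `Bool` (with `g = false < u = true`). -/
noncomputable def evalDesc {Para : Type*} (𝒮 : Set (Set Para)) (κ : Para → Bool) : Bool :=
  ⨆ S ∈ 𝒮, ⨅ α ∈ S, κ α

/-- The semantics turns `⊗` (pairwise-union product of descriptions) into the
meet of the mode lattice: `eval (𝒮₁ ⊛ 𝒮₂) κ = eval 𝒮₁ κ ⊓ eval 𝒮₂ κ`. -/
theorem evalDesc_modeProd {Para : Type*} (𝒮₁ 𝒮₂ : Set (Set Para)) (κ : Para → Bool) :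
    evalDesc (ModeProd 𝒮₁ 𝒮₂) κ = evalDesc 𝒮₁ κ ⊓ evalDesc 𝒮₂ κ := by
  unfold evalDesc ModeProd
  apply le_antisymm
  · refine iSup₂_le fun S hS => ?_
    obtain ⟨S₁, h₁, S₂, h₂, rfl⟩ := hS
    rw [iInf_union]
    exact le_inf
      (le_trans inf_le_left (le_iSup₂ (f := fun S _ => ⨅ α ∈ S, κ α) S₁ h₁))
      (le_trans inf_le_right (le_iSup₂ (f := fun S _ => ⨅ α ∈ S, κ α) S₂ h₂))
  · rw [biSup_inf_biSup]
    refine iSup₂_le fun p hp => ?_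
    refine le_trans ?_ (le_iSup₂ (f := fun S (_ : S ∈ ModeProd 𝒮₁ 𝒮₂) => ⨅ α ∈ S, κ α)
      (p.1 ∪ p.2) ⟨p.1, hp.1, p.2, hp.2, rfl⟩)
    rw [iInf_union]
end

section
/- The polymorphic term concretisation preserves binary meets (the key step of Lemma 2, that Υ_term(PM) is a Moore family): for all sets 𝒮₁, 𝒮₂ of sets of mode parameters and every assignment κ : Para → Bool, Υ_term(𝒮₁ ⊛ 𝒮₂, κ) = Υ_term(𝒮₁, κ) ∩ Υ_term(𝒮₂, κ), where 𝒮₁ ⊛ 𝒮₂ := { S₁ ∪ S₂ | S₁ ∈ 𝒮₁, S₂ ∈ 𝒮₂ }; moreover Υ_term({∅}, κ) is the set of all terms (co-strictness). -/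
/-- `modecon` sends the ground mode `false` to the set `Ground` of ground terms
and the unknown mode `true` to the set of all terms. -/
def modecon {Term : Type*} (Ground : Set Term) : Bool → Set Term :=
  fun b => if b then Set.univ else Ground

/-- The polymorphic term concretisation `Υ_term(𝒮, κ) := modecon (eval 𝒮 κ)`. -/
noncomputable def pTermCon {Para Term : Type*} (Ground : Set Term)
    (𝒮 : Set (Set Para)) (κ : Para → Bool) : Set Term :=
  modecon Ground (evalDesc 𝒮 κ)

lemma eval_true {Para : Type*} (𝒮 : Set (Set Para)) (κ : Para → Bool) :
    evalDesc 𝒮 κ = true ↔ ∃ S ∈ 𝒮, ∀ α ∈ S, κ α = true := by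
  constructor
  · intro h
    by_contra hc
    push_neg at hc
    have hle : evalDesc 𝒮 κ ≤ false := by
      refine iSup₂_le fun S hS => ?_
      obtain ⟨α, hα, hf⟩ := hc S hS
      have := iInf₂_le (f := fun α (_ : α ∈ S) => κ α) α hα
      simp only [ne_eq, Bool.not_eq_true] at hf; simpa [hf] using this
    rw [h] at hle; exact absurd hle (by simp)
  · rintro ⟨S, hS, hall⟩
    have h1 : (true : Bool) ≤ ⨅ α ∈ S, κ α := le_iInf₂ fun α hα => (hall α hα).ge
    have h2 : (⨅ α ∈ S, κ α) ≤ evalDesc 𝒮 κ :=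
      le_iSup₂ (f := fun S (_ : S ∈ 𝒮) => ⨅ α ∈ S, κ α) S hS
    exact le_antisymm le_top (h1.trans h2)

lemma eval_prod {Para : Type*} (𝒮₁ 𝒮₂ : Set (Set Para)) (κ : Para → Bool) :
    evalDesc (ModeProd 𝒮₁ 𝒮₂) κ = (evalDesc 𝒮₁ κ && evalDesc 𝒮₂ κ) := by
  rcases Bool.eq_false_or_eq_true (evalDesc (ModeProd 𝒮₁ 𝒮₂) κ) with h | h <;>
    rcases Bool.eq_false_or_eq_true (evalDesc 𝒮₁ κ && evalDesc 𝒮₂ κ) with h' | h' <;>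
      rw [h, h']
  · obtain ⟨S, hS, hall⟩ := (eval_true _ _).1 h
    obtain ⟨S₁, hS₁, S₂, hS₂, rfl⟩ := hS
    have e1 : evalDesc 𝒮₁ κ = true :=
      (eval_true _ _).2 ⟨S₁, hS₁, fun α hα => hall α (Or.inl hα)⟩
    have e2 : evalDesc 𝒮₂ κ = true :=
      (eval_true _ _).2 ⟨S₂, hS₂, fun α hα => hall α (Or.inr hα)⟩
    rw [e1, e2] at h'; exact absurd h' (by simp)
  · rw [Bool.and_eq_true] at h'
    obtain ⟨S₁, hS₁, h₁⟩ := (eval_true _ _).1 h'.1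
    obtain ⟨S₂, hS₂, h₂⟩ := (eval_true _ _).1 h'.2
    have : evalDesc (ModeProd 𝒮₁ 𝒮₂) κ = true := by
      refine (eval_true _ _).2 ⟨S₁ ∪ S₂, ⟨S₁, hS₁, S₂, hS₂, rfl⟩, fun α hα => ?_⟩
      rcases hα with hα | hα
      · exact h₁ α hα
      · exact h₂ α hα
    rw [h] at this; exact absurd this (by simp)

/-- `Υ_term` preserves binary meets and is co-strict:
`Υ_term(𝒮₁ ⊛ 𝒮₂, κ) = Υ_term(𝒮₁, κ) ∩ Υ_term(𝒮₂, κ)`, and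
`Υ_term({∅}, κ)` is the set of all terms. -/
theorem pTermCon_inter_and_costrict {Para Term : Type*} (Ground : Set Term)
    (𝒮₁ 𝒮₂ : Set (Set Para)) (κ : Para → Bool) :
    pTermCon Ground (ModeProd 𝒮₁ 𝒮₂) κ = pTermCon Ground 𝒮₁ κ ∩ pTermCon Ground 𝒮₂ κ ∧
    pTermCon Ground ({∅} : Set (Set Para)) κ = Set.univ := by
  constructor
  · rw [pTermCon, eval_prod]
    rcases Bool.eq_false_or_eq_true (evalDesc 𝒮₁ κ) with h1 | h1 <;>
      rcases Bool.eq_false_or_eq_true (evalDesc 𝒮₂ κ) with h2 | h2 <;>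
        simp [pTermCon, modecon, h1, h2]
  · have : evalDesc ({∅} : Set (Set Para)) κ = true :=
      (eval_true _ _).2 ⟨∅, rfl, fun α hα => absurd hα (Set.notMem_empty α)⟩
    simp [pTermCon, modecon, this]
end
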